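/- Let Γ ⊂ ℤ be an infinite set and let B be the Zygmund basis of all 3-dimensional intervals R₁×R₂×R₃ such that |R₁| and |R₂| are dyadic numbers and |R₃| = 2^γ·|R₂| for some γ ∈ Γ. Then there is an absolute constant c > 0 such that for every α ∈ (0,1) there exists a bounded measurable set E ⊂ ℝ³ of positive Lebesgue measure with |{x ∈ ℝ³ : M_B(χ_E)(x) > α}| ≥ c · (1/α) · (1 + log(1/α))² · |E|. -/

import Mathlib

open MeasureTheory Set
open scoped ENNReal

noncomputable section

/-- An axis-parallel interval (box) in `ℝⁿ`, given by its left and right endpoints. -/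
structure BoxInterval (n : ℕ) where
  a : Fin n → ℝ
  b : Fin n → ℝ
  hab : ∀ j, a j < b j

namespace BoxInterval

/-- The underlying set of a box. -/
def toSet {n : ℕ} (R : BoxInterval n) : Set (Fin n → ℝ) :=
  Set.univ.pi fun j => Set.Icc (R.a j) (R.b j)

/-- The side length of a box in direction `j`. -/
def side {n : ℕ} (R : BoxInterval n) (j : Fin n) : ℝ := R.b j - R.a j

/-- Translation of a box by a vector `v`. -/
def translate {n : ℕ} (R : BoxInterval n) (v : Fin n → ℝ) : BoxInterval n where
  a := fun j => R.a j + v j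
  b := fun j => R.b j + v j
  hab := fun j => add_lt_add_of_lt_of_le (R.hab j) le_rfl

end BoxInterval

/-- A rare basis in `ℝⁿ`: a nonempty translation-invariant collection of intervals. -/
def IsRareBasis {n : ℕ} (B : Set (BoxInterval n)) : Prop :=
  B.Nonempty ∧ ∀ R ∈ B, ∀ v : Fin n → ℝ, R.translate v ∈ B

/-- The geometric maximal operator `M_B` associated with a collection `B` of boxes:
`M_B f (x) = sup { (1/|R|) ∫_R |f| : x ∈ R ∈ B }`. -/
def maxOp {n : ℕ} (B : Set (BoxInterval n)) (f : (Fin n → ℝ) → ℝ)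
    (x : Fin n → ℝ) : ℝ≥0∞ :=
  ⨆ (R : BoxInterval n) (_ : R ∈ B) (_ : x ∈ R.toSet),
    (∫⁻ y in R.toSet, ENNReal.ofReal |f y| ∂volume) / volume R.toSet

/-- The spectrum `W_B ⊂ ℤⁿ` of a collection of boxes: all tuples
`(⌈log₂ |R₁|⌉, …, ⌈log₂ |Rₙ|⌉)` over boxes `R₁ × ⋯ × Rₙ ∈ B`. -/
def spectrumB {n : ℕ} (B : Set (BoxInterval n)) : Set (Fin n → ℤ) :=
  {w | ∃ R ∈ B, ∀ j, w j = ⌈Real.logb 2 (R.side j)⌉}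

/-- The slice `W_t` of `W ⊂ ℤ^{k+1}` over `t ∈ ℤᵏ`. -/
def sliceZ {k : ℕ} (W : Set (Fin (k + 1) → ℤ)) (t : Fin k → ℤ) : Set ℤ :=
  {τ | Fin.snoc t τ ∈ W}

/-- `W` is a net for `S` in `ℤ^{k+1}`: every slice of `W` is a one-dimensional
net for the corresponding slice of `S`. -/
def IsNetMulti {k : ℕ} (W S : Set (Fin (k + 1) → ℤ)) : Prop :=
  ∀ t : Fin k → ℤ, ∃ N : ℕ, ∀ τ ∈ sliceZ S t, ∃ w ∈ sliceZ W t, |τ - w| ≤ (N : ℤ)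

/-- Projection of `W ⊂ ℤⁿ` onto the first `k` coordinates. -/
def projZ {n : ℕ} (k : ℕ) (hk : k ≤ n) (W : Set (Fin n → ℤ)) : Set (Fin k → ℤ) :=
  (fun w (i : Fin k) => w (Fin.castLE hk i)) '' W

/-- `W ⊂ ℤⁿ` is dense in `S₁ × ⋯ × Sₙ`: for each `k`, `π_{k+1}(W)` is a net for
`π_k(W) × S_{k+1}`. -/
def IsDenseIn {n : ℕ} (W : Set (Fin n → ℤ)) (S : Fin n → Set ℤ) : Prop :=
  ∀ k : Fin n,
    IsNetMulti (projZ (k.val + 1) k.isLt W)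
      {v : Fin (k.val + 1) → ℤ |
        Fin.init v ∈ projZ k.val (Nat.le_of_lt k.isLt) W ∧ v (Fin.last k.val) ∈ S k}

/-- `Ω_{n,k}`: the set of `n`-tuples of positive integers summing to `k`. -/
def OmegaNK (n k : ℕ) : Set (Fin n → ℕ) :=
  {m | (∀ j, 1 ≤ m j) ∧ ∑ j, m j = k}

/-- The smallest box concentric with `R`, containing `R`, with dyadic side lengths. -/
def dyadicHull {n : ℕ} (R : BoxInterval n) : BoxInterval n where
  a := fun j => (R.a j + R.b j) / 2 - (2:ℝ) ^ ⌈Real.logb 2 (R.side j)⌉ / 2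
  b := fun j => (R.a j + R.b j) / 2 + (2:ℝ) ^ ⌈Real.logb 2 (R.side j)⌉ / 2
  hab := fun j => by
    have h : (0:ℝ) < (2:ℝ) ^ ⌈Real.logb 2 (R.side j)⌉ := by positivity
    linarith

/-- The dyadic skeleton `B_d` of a collection `B`. -/
def dyadicSkeleton {n : ℕ} (B : Set (BoxInterval n)) : Set (BoxInterval n) :=
  {Rd | ∃ R ∈ B, Rd = dyadicHull R}

/-- `B` is `Ω`-complete (for `Ω ⊆ Ω_{n,k}`). -/
def OmegaComplete {n : ℕ} (B : Set (BoxInterval n)) (k : ℕ) (Ω : Set (Fin n → ℕ)) : Prop :=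
  ∃ s : Fin n → ℕ → ℤ,
    (∀ j, ∀ m, m < k → s j m < s j (m + 1)) ∧
    ∀ m ∈ Ω, ∃ R ∈ dyadicSkeleton B, ∀ j,
      R.side j ∈ Set.Ioc ((2:ℝ) ^ s j (m j - 1)) ((2:ℝ) ^ s j (m j))

/-- Product of an `n`-dimensional box and a one-dimensional box. -/
def prodBox {n : ℕ} (J1 : BoxInterval n) (J2 : BoxInterval 1) : BoxInterval (n + 1) where
  a := Fin.snoc J1.a (J2.a 0)
  b := Fin.snoc J1.b (J2.b 0)
  hab := fun j => by
    induction j using Fin.lastCases with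
    | last => simpa using J2.hab 0
    | cast i => simpa using J1.hab i

/-- The product basis `B₁ × B₂`. -/
def prodBasis {n : ℕ} (B1 : Set (BoxInterval n)) (B2 : Set (BoxInterval 1)) :
    Set (BoxInterval (n + 1)) :=
  {R | ∃ J1 ∈ B1, ∃ J2 ∈ B2, R = prodBox J1 J2}

/-- The (is)-property of a rare basis in `ℝ²`. -/
def ISProperty (B : Set (BoxInterval 2)) : Prop :=
  ∀ k : ℕ, ∃ R : Fin (k + 1) → BoxInterval 2,
    (∀ i, R i ∈ B) ∧
    (∀ i, (R i).a = fun _ => 0) ∧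
    (∀ i, ∃ pq : Fin 2 → ℤ, ∀ l, (R i).b l = (2:ℝ) ^ pq l) ∧
    (∀ i j, i ≠ j → ∀ v : Fin 2 → ℝ, ¬ ((R i).translate v).toSet ⊆ (R j).toSet) ∧
    (∀ i j, ∃ Q ∈ B, Q.toSet = (R i).toSet ∩ (R j).toSet)


/-!
Let `K ≈ log (1/α)` and pick `γ₀ < γ₁ < ⋯` in `Γ` with gaps larger than `K`; put
`λₙ = γₙ + K + 3`. Let `Z ⊂ ℝ` be the Cantor-type set obtained from `[0, 2^(λ₀-1))` by
replacing, at step `n`, the current set (which lies in `[0, 2^λₙ)`) by `2^(λₙ₊₁-λₙ-1)` copies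
of itself spaced `2^λₙ` apart, and let `E = [0,1)² × Z`. Because the scales are separated, a
window of length `2^(γₜ+u)`, `1 ≤ u ≤ K`, placed at a suitable point `z` of the level-`t`
structure of `Z` contains whole blocks of step `t - 1` and so meets `Z` in measure
`≳ 2^(γₜ+u-t)`. Hence for `x` with `x₁ ∼ 2^(K-t-u)`, `x₂ ∼ 2^u` and such a `z = x₃`, the box
of the basis with sides `2^(K+1-t-u)`, `2^u`, `2^(γₜ+u)` and a vertex at `x` contains
`[0,1)²` in its first two factors and has average `2^(-K-2) > α` on `E`. These pieces, for
`1 ≤ t, u ≤ K/2`, are pairwise disjoint and each has measure `2^(K-2) |E|`, which gives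
`|{M_B χ_E > α}| ≳ K² 2^K |E| ≈ α⁻¹ log² (1/α) |E|`. When `α` is bounded below, a single box
of the basis serves as `E`.
-/

theorem ENNReal.ofReal_two_zpow_mul (a b : ℤ) :
    ENNReal.ofReal (2 ^ a) * ENNReal.ofReal (2 ^ b) = ENNReal.ofReal (2 ^ (a + b)) := by
  rw [← ENNReal.ofReal_mul (by positivity), zpow_add₀ two_ne_zero]

theorem mem_univ_pi_fin_three {α : Type*} {S : Fin 3 → Set α} {x : Fin 3 → α} :
    x ∈ univ.pi S ↔ x 0 ∈ S 0 ∧ x 1 ∈ S 1 ∧ x 2 ∈ S 2 := by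
  simp [Fin.forall_fin_succ]

theorem volume_pi_fin_three (S : Fin 3 → Set ℝ) :
    volume (univ.pi S) = volume (S 0) * volume (S 1) * volume (S 2) := by
  rw [volume_pi_pi, Fin.prod_univ_three]

namespace BoxInterval

variable {n : ℕ}

theorem toSet_eq_Icc (R : BoxInterval n) : R.toSet = Icc R.a R.b := pi_univ_Icc _ _

theorem measurableSet_toSet (R : BoxInterval n) : MeasurableSet R.toSet := by
  rw [toSet_eq_Icc]; exact measurableSet_Icc

theorem isBounded_toSet (R : BoxInterval n) : Bornology.IsBounded R.toSet := by
  rw [toSet_eq_Icc]; exact Metric.isBounded_Icc _ _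

theorem volume_toSet (R : BoxInterval n) :
    volume R.toSet = ∏ j, ENNReal.ofReal (R.side j) := by
  rw [toSet_eq_Icc, Real.volume_Icc_pi]; rfl

theorem volume_toSet_pos (R : BoxInterval n) : 0 < volume R.toSet := by
  rw [volume_toSet, pos_iff_ne_zero, Finset.prod_ne_zero_iff]
  exact fun j _ => (ENNReal.ofReal_pos.2 (sub_pos.2 (R.hab j))).ne'

theorem volume_toSet_ne_top (R : BoxInterval n) : volume R.toSet ≠ ⊤ := by
  rw [toSet_eq_Icc]; exact measure_Icc_lt_top.ne

def ofSides (a ℓ : Fin n → ℝ) (hℓ : ∀ j, 0 < ℓ j) : BoxInterval n where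
  a := a
  b := a + ℓ
  hab j := lt_add_of_pos_right _ (hℓ j)

@[simp]
theorem side_ofSides (a ℓ : Fin n → ℝ) (hℓ : ∀ j, 0 < ℓ j) (j : Fin n) :
    (ofSides a ℓ hℓ).side j = ℓ j := by
  simp [side, ofSides]

theorem toSet_ofSides (a ℓ : Fin n → ℝ) (hℓ : ∀ j, 0 < ℓ j) :
    (ofSides a ℓ hℓ).toSet = univ.pi fun j => Icc (a j) (a j + ℓ j) := rfl

end BoxInterval

theorem lintegral_abs_indicator_one {n : ℕ} {E : Set (Fin n → ℝ)} (hE : MeasurableSet E)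
    (S : Set (Fin n → ℝ)) :
    ∫⁻ y in S, ENNReal.ofReal |E.indicator (fun _ => (1:ℝ)) y| = volume (E ∩ S) := by
  have h : (fun y => ENNReal.ofReal |E.indicator (fun _ => (1:ℝ)) y|) =
      E.indicator fun _ => 1 := by
    ext y; by_cases hy : y ∈ E <;> simp [hy]
  rw [h, setLIntegral_indicator hE, setLIntegral_one]

theorem ofReal_lt_maxOp {n : ℕ} {B : Set (BoxInterval n)} {R : BoxInterval n} (hR : R ∈ B)
    {x : Fin n → ℝ} (hx : x ∈ R.toSet) {E : Set (Fin n → ℝ)} (hE : MeasurableSet E) {α : ℝ}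
    (hα : ENNReal.ofReal α * volume R.toSet < volume (E ∩ R.toSet)) :
    ENNReal.ofReal α < maxOp B (E.indicator fun _ => (1:ℝ)) x := by
  refine lt_of_lt_of_le ?_ (le_iSup₂_of_le R hR <| le_iSup_of_le hx le_rfl)
  rw [lintegral_abs_indicator_one hE, ENNReal.lt_div_iff_mul_lt (Or.inl R.volume_toSet_pos.ne')
    (Or.inl R.volume_toSet_ne_top)]
  exact hα

def zygmundBasis (Γ : Set ℤ) : Set (BoxInterval 3) :=
  {R | (∃ s : ℤ, R.side 0 = (2:ℝ) ^ s) ∧ (∃ s : ℤ, R.side 1 = (2:ℝ) ^ s) ∧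
      ∃ γ ∈ Γ, R.side 2 = (2:ℝ) ^ γ * R.side 1}

def zygmundBox (a : Fin 3 → ℝ) (p q g : ℤ) : BoxInterval 3 :=
  .ofSides a ![2 ^ p, 2 ^ q, 2 ^ (g + q)] fun j => by fin_cases j <;> simp <;> positivity

theorem zygmundBox_mem {Γ : Set ℤ} {g : ℤ} (hg : g ∈ Γ) (a : Fin 3 → ℝ) (p q : ℤ) :
    zygmundBox a p q g ∈ zygmundBasis Γ :=
  ⟨⟨p, by simp [zygmundBox]⟩, ⟨q, by simp [zygmundBox]⟩,
    ⟨g, hg, by simp [zygmundBox, zpow_add₀ (two_ne_zero' ℝ)]⟩⟩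

theorem toSet_zygmundBox (a : Fin 3 → ℝ) (p q g : ℤ) :
    (zygmundBox a p q g).toSet = univ.pi ![Icc (a 0) (a 0 + 2 ^ p), Icc (a 1) (a 1 + 2 ^ q),
      Icc (a 2) (a 2 + 2 ^ (g + q))] := by
  rw [zygmundBox, BoxInterval.toSet_ofSides]
  congr
  funext j
  fin_cases j <;> rfl

theorem volume_zygmundBox (a : Fin 3 → ℝ) (p q g : ℤ) :
    volume (zygmundBox a p q g).toSet = ENNReal.ofReal (2 ^ (p + q + (g + q))) := by
  simp only [BoxInterval.volume_toSet, Fin.prod_univ_three, zygmundBox, BoxInterval.side_ofSides]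
  simp only [Matrix.cons_val_zero, Matrix.cons_val_one, Matrix.cons_val_two, Matrix.head_cons,
    Matrix.tail_cons]
  rw [ENNReal.ofReal_two_zpow_mul, ENNReal.ofReal_two_zpow_mul]

theorem exists_box_subset_superlevel {Γ : Set ℤ} (hΓ : Γ.Nonempty) {α : ℝ} (hα : α < 1) :
    ∃ E : Set (Fin 3 → ℝ), Bornology.IsBounded E ∧ MeasurableSet E ∧ 0 < volume E ∧
      E ⊆ {x | ENNReal.ofReal α < maxOp (zygmundBasis Γ) (E.indicator fun _ => (1:ℝ)) x} := by
  obtain ⟨g, hg⟩ := hΓ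
  set R := zygmundBox 0 0 0 g
  refine ⟨R.toSet, R.isBounded_toSet, R.measurableSet_toSet, R.volume_toSet_pos,
    fun x hx => ofReal_lt_maxOp (zygmundBox_mem hg 0 0 0) hx R.measurableSet_toSet ?_⟩
  rw [inter_self]
  simpa using ENNReal.mul_lt_mul_left R.volume_toSet_pos.ne' R.volume_toSet_ne_top
    (ENNReal.ofReal_lt_one.2 hα)

namespace Zygmund

section Copies

variable {A : Set ℝ} {c : ℝ}

def copies (A : Set ℝ) (c : ℝ) (N : ℕ) : Set ℝ :=
  ⋃ m ∈ Finset.range N, (fun z => m * c + z) '' A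

theorem volume_image_const_add (b : ℝ) (S : Set ℝ) : volume ((fun z => b + z) '' S) = volume S := by
  rw [image_add_left]; exact measure_preimage_add _ _ _

theorem measurableSet_image_const_add {S : Set ℝ} (hS : MeasurableSet S) (b : ℝ) :
    MeasurableSet ((fun z => b + z) '' S) :=
  (MeasurableEquiv.addLeft b).measurableSet_image.2 hS

theorem measurableSet_copies (hA : MeasurableSet A) (c : ℝ) (N : ℕ) :
    MeasurableSet (copies A c N) :=
  .biUnion (Finset.range N).countable_toSet fun _ _ => measurableSet_image_const_add hA _

theorem copies_subset_Ico (hA : A ⊆ Ico 0 c) (N : ℕ) : copies A c N ⊆ Ico 0 (N * c) := by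
  simp only [copies, iUnion_subset_iff, Finset.mem_range, image_subset_iff]
  intro m hm z hz
  obtain ⟨hz0, hzc⟩ := hA hz
  have hmN : (m : ℝ) + 1 ≤ N := by exact_mod_cast hm
  constructor <;> nlinarith

theorem pairwise_disjoint_image_add (hA : A ⊆ Ico 0 c) :
    Pairwise (Function.onFun Disjoint fun m : ℕ => (fun z => m * c + z) '' A) := by
  intro m m' hmm'
  rw [Function.onFun, disjoint_left]
  rintro _ ⟨z, hz, rfl⟩ ⟨z', hz', he⟩
  obtain ⟨hz0, hzc⟩ := hA hz
  obtain ⟨hz0', hzc'⟩ := hA hz'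
  rcases Nat.lt_or_gt_of_ne hmm' with h | h
  · have : (m : ℝ) + 1 ≤ m' := by exact_mod_cast h
    nlinarith
  · have : (m' : ℝ) + 1 ≤ m := by exact_mod_cast h
    nlinarith

theorem volume_copies (hA : A ⊆ Ico 0 c) (hAm : MeasurableSet A) (N : ℕ) :
    volume (copies A c N) = N * volume A := by
  rw [copies, measure_biUnion_finset ((pairwise_disjoint_image_add hA).set_pairwise _)
    fun _ _ => measurableSet_image_const_add hAm _]
  simp

/-- The window of length `(k + 1) c` starting at `y` contains `k` whole blocks. -/
theorem nat_mul_volume_le_volume_copies_inter_Icc (hA : A ⊆ Ico 0 c) (hAm : MeasurableSet A)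
    {N k : ℕ} {y : ℝ} (hy : 0 ≤ y) (hyN : y + (k + 1) * c ≤ N * c) :
    k * volume A ≤ volume (copies A c N ∩ Icc y (y + (k + 1) * c)) := by
  rcases A.eq_empty_or_nonempty with rfl | ⟨z₀, hz₀⟩
  · simp
  have hc : 0 < c := (hA hz₀).1.trans_lt (hA hz₀).2
  set m₀ := ⌈y / c⌉₊
  have hm₀ : y ≤ m₀ * c := (div_le_iff₀ hc).1 (Nat.le_ceil _)
  have hm₀' : m₀ * c < y + c := by
    have := Nat.ceil_lt_add_one (div_nonneg hy hc.le)
    rw [div_add_one hc.ne', lt_div_iff₀ hc] at this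
    exact this
  have hsub : (fun z => m₀ * c + z) '' copies A c k ⊆ copies A c N ∩ Icc y (y + (k + 1) * c) := by
    simp only [copies, image_iUnion₂, image_image, iUnion_subset_iff, Finset.mem_range,
      image_subset_iff]
    intro i hi z hz
    obtain ⟨hz0, hzc⟩ := hA hz
    have hik : (i : ℝ) + 1 ≤ k := by exact_mod_cast hi
    refine ⟨mem_iUnion₂.2 ⟨m₀ + i, ?_, z, hz, by push_cast; ring⟩,
      by nlinarith, by nlinarith⟩
    have : ((m₀ + i : ℕ) : ℝ) < N := by
      push_cast
      nlinarith
    exact_mod_cast this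
  calc k * volume A = volume ((fun z => m₀ * c + z) '' copies A c k) := by
        rw [volume_image_const_add, volume_copies hA hAm]
    _ ≤ _ := measure_mono hsub

theorem ofReal_mul_volume_le_volume_copies_inter_Icc (hA : A ⊆ Ico 0 c) (hAm : MeasurableSet A)
    {N : ℕ} {y W : ℝ} (hy : 0 ≤ y) (hyN : y + W ≤ N * c) :
    ENNReal.ofReal (W / c - 2) * volume A ≤ volume (copies A c N ∩ Icc y (y + W)) := by
  rcases A.eq_empty_or_nonempty with rfl | ⟨z₀, hz₀⟩
  · simp
  have hc : 0 < c := (hA hz₀).1.trans_lt (hA hz₀).2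
  rcases lt_or_ge (W / c) 1 with hW | hW
  · rw [ENNReal.ofReal_of_nonpos (by linarith), zero_mul]
    exact bot_le
  set k := ⌊W / c⌋₊ - 1
  have hk : (k : ℝ) + 1 = ⌊W / c⌋₊ := by
    have : 1 ≤ ⌊W / c⌋₊ := Nat.one_le_floor_iff _ |>.2 hW
    rw [← Nat.cast_add_one, Nat.sub_add_cancel this]
  have hkW : (k + 1) * c ≤ W := by
    rw [hk, ← le_div_iff₀ hc]; exact Nat.floor_le (by linarith)
  have hWk : W / c - 2 ≤ k := by linarith [Nat.lt_floor_add_one (W / c)]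
  calc ENNReal.ofReal (W / c - 2) * volume A ≤ k * volume A := by
        gcongr; exact ENNReal.ofReal_le_of_le_toReal (by simpa using hWk)
    _ ≤ volume (copies A c N ∩ Icc y (y + (k + 1) * c)) :=
        nat_mul_volume_le_volume_copies_inter_Icc hA hAm hy (by linarith)
    _ ≤ _ := by gcongr

end Copies

section Cantor

variable (lam : ℕ → ℤ)

def blockCount (n : ℕ) : ℕ := 2 ^ (lam (n + 1) - lam n - 1).toNat

def cantorIter (A : Set ℝ) (t : ℕ) : ℕ → Set ℝ
  | 0 => A
  | j + 1 => copies (cantorIter A t j) (2 ^ lam (t + j)) (blockCount lam (t + j))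

def cantorSet (n : ℕ) : Set ℝ := cantorIter lam (Ico 0 (2 ^ (lam 0 - 1))) 0 n

variable {lam}

theorem blockCount_eq (hlam : StrictMono lam) (n : ℕ) :
    (blockCount lam n : ℝ) = 2 ^ (lam (n + 1) - lam n - 1) := by
  have h : ((lam (n + 1) - lam n - 1).toNat : ℤ) = lam (n + 1) - lam n - 1 :=
    Int.toNat_of_nonneg (by linarith [hlam n.lt_succ_self])
  rw [blockCount, Nat.cast_pow, Nat.cast_ofNat, ← zpow_natCast, h]

theorem blockCount_mul (hlam : StrictMono lam) (n : ℕ) :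
    (blockCount lam n : ℝ) * 2 ^ lam n = 2 ^ (lam (n + 1) - 1) := by
  rw [blockCount_eq hlam, ← zpow_add₀ two_ne_zero]
  ring_nf

theorem cantorIter_add (A : Set ℝ) (s t j : ℕ) :
    cantorIter lam A s (t + j) = cantorIter lam (cantorIter lam A s t) (s + t) j := by
  induction j with
  | zero => rfl
  | succ j ih => rw [← add_assoc, cantorIter, ih, cantorIter, add_assoc]

theorem measurableSet_cantorIter {A : Set ℝ} (hA : MeasurableSet A) (t j : ℕ) :
    MeasurableSet (cantorIter lam A t j) := by
  induction j with
  | zero => exact hA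
  | succ j ih => exact measurableSet_copies ih _ _

theorem cantorIter_subset_Ico (hlam : StrictMono lam) {A : Set ℝ} {t : ℕ}
    (hA : A ⊆ Ico 0 (2 ^ lam t)) (j : ℕ) : cantorIter lam A t j ⊆ Ico 0 (2 ^ lam (t + j)) := by
  induction j with
  | zero => exact hA
  | succ j ih =>
    refine (copies_subset_Ico ih _).trans (Ico_subset_Ico_right ?_)
    rw [blockCount_mul hlam, ← add_assoc]
    exact zpow_le_zpow_right₀ one_le_two (by omega)

theorem volume_cantorIter (hlam : StrictMono lam) {A : Set ℝ} {t : ℕ}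
    (hA : A ⊆ Ico 0 (2 ^ lam t)) (hAm : MeasurableSet A) (j : ℕ) :
    volume (cantorIter lam A t j) = ENNReal.ofReal (2 ^ (lam (t + j) - lam t - j)) * volume A := by
  induction j with
  | zero => simp [cantorIter]
  | succ j ih =>
    rw [cantorIter, volume_copies (cantorIter_subset_Ico hlam hA j)
      (measurableSet_cantorIter hAm t j), ih, ← mul_assoc, ← ENNReal.ofReal_natCast,
      ← ENNReal.ofReal_mul (by positivity), blockCount_eq hlam, ← zpow_add₀ two_ne_zero]
    congr 3
    rw [← add_assoc]
    push_cast
    ring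

theorem exists_translate_of_mem_cantorIter {A : Set ℝ} {t j : ℕ} {y : ℝ}
    (hy : y ∈ cantorIter lam A t j) :
    ∃ σ : ℝ, y - σ ∈ A ∧ ∀ A' : Set ℝ, (fun z => σ + z) '' A' ⊆ cantorIter lam A' t j := by
  induction j generalizing y with
  | zero => exact ⟨0, by simpa [cantorIter] using hy, fun A' => by simp [cantorIter]⟩
  | succ j ih =>
    simp only [cantorIter, copies, mem_iUnion₂] at hy
    obtain ⟨m, hm, y', hy', rfl⟩ := hy
    obtain ⟨σ, hσA, hσ⟩ := ih hy'
    refine ⟨m * 2 ^ lam (t + j) + σ, by convert hσA using 1; ring, fun A' => ?_⟩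
    rintro _ ⟨z, hz, rfl⟩
    exact mem_iUnion₂.2 ⟨m, hm, σ + z, hσ A' ⟨z, hz, rfl⟩, by ring⟩

theorem cantorSet_succ (n : ℕ) :
    cantorSet lam (n + 1) = copies (cantorSet lam n) (2 ^ lam n) (blockCount lam n) := by
  simp only [cantorSet, cantorIter, zero_add]

theorem measurableSet_cantorSet (n : ℕ) : MeasurableSet (cantorSet lam n) :=
  measurableSet_cantorIter measurableSet_Ico 0 n

theorem cantorSet_subset_Ico (hlam : StrictMono lam) (n : ℕ) :
    cantorSet lam n ⊆ Ico 0 (2 ^ lam n) := by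
  simpa [cantorSet] using cantorIter_subset_Ico hlam (t := 0)
    (Ico_subset_Ico_right (zpow_le_zpow_right₀ one_le_two (by omega))) n

theorem volume_cantorSet (hlam : StrictMono lam) (n : ℕ) :
    volume (cantorSet lam n) = ENNReal.ofReal (2 ^ (lam n - n - 1)) := by
  rw [cantorSet, volume_cantorIter hlam (t := 0)
    (Ico_subset_Ico_right (zpow_le_zpow_right₀ one_le_two (by omega))) measurableSet_Ico,
    Real.volume_Ico, sub_zero, ENNReal.ofReal_two_zpow_mul, zero_add]
  congr 2
  ring

theorem le_volume_cantorSet_succ_inter_Icc (hlam : StrictMono lam) {s : ℕ} {w : ℤ}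
    (hw : lam s + 2 ≤ w) (hw' : w ≤ lam (s + 1) - 2) {y : ℝ}
    (hy : y ∈ Ico 0 (2 ^ (lam (s + 1) - 2))) :
    ENNReal.ofReal (2 ^ (w - s - 2)) ≤ volume (cantorSet lam (s + 1) ∩ Icc y (y + 2 ^ w)) := by
  have hyN : y + 2 ^ w ≤ blockCount lam s * 2 ^ lam s := by
    have h1 : (2:ℝ) ^ w ≤ 2 ^ (lam (s + 1) - 2) := zpow_le_zpow_right₀ one_le_two hw'
    have h2 : (2:ℝ) ^ (lam (s + 1) - 1) = 2 * 2 ^ (lam (s + 1) - 2) := by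
      rw [← zpow_one_add₀ two_ne_zero]; ring_nf
    rw [blockCount_mul hlam]
    linarith [hy.2]
  rw [cantorSet_succ]
  refine le_trans ?_ (ofReal_mul_volume_le_volume_copies_inter_Icc
    (cantorSet_subset_Ico hlam s) (measurableSet_cantorSet s) hy.1 hyN)
  rw [volume_cantorSet hlam, ← ENNReal.ofReal_mul' (by positivity)]
  apply ENNReal.ofReal_le_ofReal
  have e1 : (2:ℝ) ^ w / 2 ^ lam s = 2 * 2 ^ (w - lam s - 1) := by
    rw [← zpow_sub₀ two_ne_zero, ← zpow_one_add₀ two_ne_zero]; ring_nf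
  have e2 : (2:ℝ) ≤ 2 ^ (w - lam s - 1) := by
    simpa using zpow_le_zpow_right₀ one_le_two (show (1:ℤ) ≤ w - lam s - 1 by omega)
  have e3 : (2:ℝ) ^ (w - s - 2) = 2 ^ (w - lam s - 1) * 2 ^ (lam s - s - 1) := by
    rw [← zpow_add₀ two_ne_zero]; ring_nf
  rw [e1, e3]
  gcongr
  linarith

theorem le_volume_cantorSet_inter_Icc (hlam : StrictMono lam) {s T : ℕ} (hsT : s + 1 ≤ T)
    {w : ℤ} (hw : lam s + 2 ≤ w) (hw' : w ≤ lam (s + 1) - 2) {y : ℝ}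
    (hy : y ∈ cantorIter lam (Ico 0 (2 ^ (lam (s + 1) - 2))) (s + 1) (T - (s + 1))) :
    ENNReal.ofReal (2 ^ (w - s - 2)) ≤ volume (cantorSet lam T ∩ Icc y (y + 2 ^ w)) := by
  obtain ⟨σ, hσ, hσT⟩ := exists_translate_of_mem_cantorIter hy
  have hT : cantorIter lam (cantorSet lam (s + 1)) (s + 1) (T - (s + 1)) = cantorSet lam T := by
    have := cantorIter_add (lam := lam) (Ico 0 (2 ^ (lam 0 - 1))) 0 (s + 1) (T - (s + 1))
    rwa [zero_add, Nat.add_sub_cancel' hsT, eq_comm] at this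
  calc ENNReal.ofReal (2 ^ (w - s - 2))
      ≤ volume (cantorSet lam (s + 1) ∩ Icc (y - σ) (y - σ + 2 ^ w)) :=
        le_volume_cantorSet_succ_inter_Icc hlam hw hw' hσ
    _ = volume ((fun z => σ + z) '' (cantorSet lam (s + 1) ∩ Icc (y - σ) (y - σ + 2 ^ w))) :=
        (volume_image_const_add _ _).symm
    _ ≤ volume (cantorSet lam T ∩ Icc y (y + 2 ^ w)) := by
        refine measure_mono <| (image_inter_subset _ _ _).trans <|
          inter_subset_inter (hT ▸ hσT _) ?_
        rw [image_const_add_Icc]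
        exact Icc_subset_Icc (by linarith) (by linarith)

end Cantor

section Construction

def dyadicShell (n : ℤ) : Set ℝ := Ico (2 ^ n) (2 ^ (n + 1))

theorem volume_dyadicShell (n : ℤ) : volume (dyadicShell n) = ENNReal.ofReal (2 ^ n) := by
  rw [dyadicShell, Real.volume_Ico, zpow_add_one₀ two_ne_zero]
  ring_nf

theorem pairwise_disjoint_dyadicShell : Pairwise (Function.onFun Disjoint dyadicShell) := by
  intro m n hmn
  rw [Function.onFun, disjoint_left]
  rintro x ⟨hm, hm'⟩ ⟨hn, hn'⟩
  have h1 : m < n + 1 := (zpow_lt_zpow_iff_right₀ one_lt_two).1 (hm.trans_lt hn')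
  have h2 : n < m + 1 := (zpow_lt_zpow_iff_right₀ one_lt_two).1 (hn.trans_lt hm')
  omega

variable (K : ℕ) (γ : ℕ → ℤ)

-- The shift `K + 3` keeps a window of length `2 ^ (γ t + u)`, `u ≤ K + 1`, starting in
-- `[0, 2 ^ (cantorScale K γ t - 2))` inside the span `[0, 2 ^ (cantorScale K γ t - 1))` of
-- level `t` of the Cantor set.
def cantorScale (n : ℕ) : ℤ := γ n + K + 3

def testSet (T : ℕ) : Set (Fin 3 → ℝ) :=
  univ.pi ![Ico 0 1, Ico 0 1, cantorSet (cantorScale K γ) T]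

def levelPiece (T t u : ℕ) : Set (Fin 3 → ℝ) :=
  univ.pi ![dyadicShell (K - t - u), dyadicShell (u - 1),
    cantorIter (cantorScale K γ) (Ico 0 (2 ^ (cantorScale K γ t - 2))) t (T - t)]

variable {K γ}

theorem strictMono_cantorScale (hγ : StrictMono γ) : StrictMono (cantorScale K γ) :=
  fun m n hmn => by simp only [cantorScale]; linarith [hγ hmn]

theorem measurableSet_testSet (T : ℕ) : MeasurableSet (testSet K γ T) :=
  .univ_pi fun i => by
    fin_cases i
    exacts [measurableSet_Ico, measurableSet_Ico, measurableSet_cantorSet T]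

theorem isBounded_testSet (hγ : StrictMono γ) (T : ℕ) : Bornology.IsBounded (testSet K γ T) :=
  .pi fun i => by
    fin_cases i
    exacts [Metric.isBounded_Ico 0 1, Metric.isBounded_Ico 0 1,
      (Metric.isBounded_Ico _ _).subset (cantorSet_subset_Ico (strictMono_cantorScale hγ) T)]

theorem volume_testSet (hγ : StrictMono γ) (T : ℕ) :
    volume (testSet K γ T) = ENNReal.ofReal (2 ^ (cantorScale K γ T - T - 1)) := by
  simp [testSet, volume_pi_fin_three, volume_cantorSet (strictMono_cantorScale hγ)]

theorem measurableSet_levelPiece (T t u : ℕ) : MeasurableSet (levelPiece K γ T t u) :=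
  .univ_pi fun i => by
    fin_cases i
    exacts [measurableSet_Ico, measurableSet_Ico, measurableSet_cantorIter measurableSet_Ico _ _]

theorem volume_levelPiece (hγ : StrictMono γ) {T t : ℕ} (htT : t ≤ T) (u : ℕ) :
    volume (levelPiece K γ T t u) =
      ENNReal.ofReal (2 ^ ((K : ℤ) - 2)) * volume (testSet K γ T) := by
  have hlam := strictMono_cantorScale (K := K) hγ
  simp only [levelPiece, volume_pi_fin_three, Matrix.cons_val_zero, Matrix.cons_val_one,
    Matrix.cons_val_two, Matrix.head_cons, Matrix.tail_cons, volume_dyadicShell]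
  rw [volume_cantorIter hlam (Ico_subset_Ico_right (zpow_le_zpow_right₀ one_le_two (by omega)))
    measurableSet_Ico, Real.volume_Ico, sub_zero, Nat.add_sub_cancel' htT, volume_testSet hγ]
  simp only [ENNReal.ofReal_two_zpow_mul]
  congr 2
  push_cast [Nat.cast_sub htT]
  ring

theorem disjoint_levelPiece (T : ℕ) {t u t' u' : ℕ} (h : (t, u) ≠ (t', u')) :
    Disjoint (levelPiece K γ T t u) (levelPiece K γ T t' u') := by
  rw [levelPiece, levelPiece, disjoint_univ_pi]
  by_cases hu : u = u'
  · refine ⟨0, pairwise_disjoint_dyadicShell ?_⟩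
    subst hu
    have : t ≠ t' := fun ht => h (by rw [ht])
    omega
  · exact ⟨1, pairwise_disjoint_dyadicShell (by omega)⟩

theorem volume_cantorSet_inter_Icc_le_volume_testSet_inter {a : Fin 3 → ℝ} {p q g : ℤ}
    (h0 : a 0 ≤ 0) (h0' : 1 ≤ a 0 + 2 ^ p) (h1 : a 1 ≤ 0) (h1' : 1 ≤ a 1 + 2 ^ q) (T : ℕ) :
    volume (cantorSet (cantorScale K γ) T ∩ Icc (a 2) (a 2 + 2 ^ (g + q))) ≤
      volume (testSet K γ T ∩ (zygmundBox a p q g).toSet) := by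
  calc _ = volume (univ.pi ![Ico (0:ℝ) 1, Ico 0 1,
          cantorSet (cantorScale K γ) T ∩ Icc (a 2) (a 2 + 2 ^ (g + q))]) := by
        simp [volume_pi_fin_three]
    _ ≤ _ := by
      rw [testSet, toSet_zygmundBox, ← pi_inter_distrib]
      refine measure_mono (pi_mono fun j _ => ?_)
      fin_cases j
      · exact subset_inter subset_rfl (Ico_subset_Icc_self.trans (Icc_subset_Icc h0 h0'))
      · exact subset_inter subset_rfl (Ico_subset_Icc_self.trans (Icc_subset_Icc h1 h1'))
      · exact subset_rfl

theorem levelPiece_subset_superlevel {Γ : Set ℤ} (hgap : ∀ n, γ n + K + 4 ≤ γ (n + 1))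
    {T t u : ℕ} (hγt : γ t ∈ Γ) (ht : 1 ≤ t) (htT : t ≤ T) (hu : 1 ≤ u) (htu : t + u ≤ K)
    {α : ℝ} (hα : α * 2 ^ (K + 2) < 1) :
    levelPiece K γ T t u ⊆ {x | ENNReal.ofReal α <
      maxOp (zygmundBasis Γ) ((testSet K γ T).indicator fun _ => (1:ℝ)) x} := by
  have hlam : StrictMono (cantorScale K γ) :=
    strictMono_nat_of_lt_succ fun n => by simp only [cantorScale]; linarith [hgap n]
  obtain ⟨s, rfl⟩ : ∃ s, t = s + 1 := ⟨t - 1, by omega⟩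
  intro x hx
  simp only [levelPiece, mem_univ_pi_fin_three, Matrix.cons_val_zero, Matrix.cons_val_one,
    Matrix.cons_val_two, Matrix.head_cons, Matrix.tail_cons] at hx
  obtain ⟨hx0, hx1, hx2⟩ := hx
  set p : ℤ := K - (s + 1) - u + 1
  set w : ℤ := γ (s + 1) + u
  set R := zygmundBox ![x 0 - 2 ^ p, x 1 - 2 ^ (u : ℤ), x 2] p u (γ (s + 1))
  have hx0' : 1 ≤ x 0 ∧ x 0 < 2 ^ p :=
    ⟨(one_le_zpow₀ one_le_two (by omega)).trans hx0.1, by simpa [p] using hx0.2⟩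
  have hx1' : 1 ≤ x 1 ∧ x 1 < 2 ^ (u : ℤ) :=
    ⟨(one_le_zpow₀ one_le_two (by omega)).trans hx1.1, by simpa using hx1.2⟩
  have hxR : x ∈ R.toSet := by
    simp only [R, toSet_zygmundBox, mem_univ_pi_fin_three, Matrix.cons_val_zero,
      Matrix.cons_val_one, Matrix.cons_val_two, Matrix.head_cons, Matrix.tail_cons,
      sub_add_cancel, mem_Icc, sub_le_self_iff, le_add_iff_nonneg_right, le_rfl, and_true,
      true_and]
    refine ⟨?_, ?_, ?_⟩ <;> positivity
  have hmass : ENNReal.ofReal (2 ^ (w - s - 2)) ≤ volume (testSet K γ T ∩ R.toSet) :=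
    (le_volume_cantorSet_inter_Icc hlam htT (by simp only [cantorScale, w]; linarith [hgap s])
      (by simp only [cantorScale, w]; omega) hx2).trans
    (volume_cantorSet_inter_Icc_le_volume_testSet_inter
      (show x 0 - 2 ^ p ≤ 0 by linarith) (show 1 ≤ x 0 - 2 ^ p + 2 ^ p by linarith)
      (show x 1 - 2 ^ (u : ℤ) ≤ 0 by linarith)
      (show 1 ≤ x 1 - 2 ^ (u : ℤ) + 2 ^ (u : ℤ) by linarith) T)
  refine ofReal_lt_maxOp (zygmundBox_mem hγt _ _ _) hxR (measurableSet_testSet T) ?_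
  refine lt_of_lt_of_le ?_ hmass
  rw [volume_zygmundBox, ← ENNReal.ofReal_mul' (by positivity),
    ENNReal.ofReal_lt_ofReal_iff (by positivity)]
  have hsplit : (2:ℝ) ^ (p + u + (γ (s + 1) + u)) = 2 ^ (K + 2) * 2 ^ (w - s - 2) := by
    rw [← zpow_natCast, ← zpow_add₀ two_ne_zero]
    congr 1
    push_cast
    ring
  rw [hsplit, ← mul_assoc]
  exact mul_lt_of_lt_one_left (by positivity) hα

end Construction

theorem exists_seq_mem_add_le {Γ : Set ℤ} (hΓ : Γ.Infinite) (d : ℤ) (N : ℕ) :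
    ∃ g : ℕ → ℤ, (∀ n ≤ N, g n ∈ Γ) ∧ ∀ n, g n + d ≤ g (n + 1) := by
  induction N with
  | zero =>
    obtain ⟨x, hx⟩ := hΓ.nonempty
    exact ⟨fun n => x + n * d, fun n hn => by simpa [Nat.le_zero.1 hn] using hx,
      fun n => by push_cast; linarith⟩
  | succ N ih =>
    obtain ⟨g, hgΓ, hg⟩ := ih
    obtain ⟨x, hxΓ, hx⟩ := hΓ.exists_notMem_finite (finite_Icc (g 0 - d) (g N + d))
    rcases not_and_or.1 hx with hlo | hhi
    · refine ⟨fun | 0 => x | n + 1 => g n, fun n hn => ?_, fun n => ?_⟩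
      · rcases n with _ | n
        exacts [hxΓ, hgΓ n (by omega)]
      · rcases n with _ | n
        exacts [by change x + d ≤ g 0; linarith, hg n]
    · refine ⟨fun n => if n ≤ N then g n else g n + (x - g (N + 1)), fun n hn => ?_, fun n => ?_⟩
      · rcases Nat.lt_or_eq_of_le hn with hn | rfl
        · simpa [Nat.lt_succ_iff.1 hn] using hgΓ n (by omega)
        · simpa using hxΓ
      · dsimp only
        rcases lt_trichotomy n N with h | rfl | h
        · rw [if_pos h.le, if_pos (Nat.succ_le_of_lt h)]
          exact hg n
        · rw [if_pos le_rfl, if_neg (Nat.not_succ_le_self n)]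
          linarith
        · rw [if_neg h.not_ge, if_neg (by omega)]
          linarith [hg n]

theorem exists_superlevel_volume_ge {Γ : Set ℤ} (hΓ : Γ.Infinite) (Q : ℕ) {α : ℝ}
    (hα : α * 2 ^ (2 * Q + 2) < 1) :
    ∃ E : Set (Fin 3 → ℝ), Bornology.IsBounded E ∧ MeasurableSet E ∧ 0 < volume E ∧
      ENNReal.ofReal (Q ^ 2 * 2 ^ (2 * Q) / 4) * volume E ≤
        volume {x | ENNReal.ofReal α < maxOp (zygmundBasis Γ) (E.indicator fun _ => (1:ℝ)) x} := by
  obtain ⟨γ, hγΓ, hgap⟩ := exists_seq_mem_add_le hΓ (2 * Q + 4) Q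
  have hgap' : ∀ n, γ n + (2 * Q : ℕ) + 4 ≤ γ (n + 1) := fun n => by push_cast; linarith [hgap n]
  have hγ : StrictMono γ := strictMono_nat_of_lt_succ fun n => by linarith [hgap n]
  set F := Finset.Icc 1 Q ×ˢ Finset.Icc 1 Q
  have hF : ∀ p ∈ F, 1 ≤ p.1 ∧ p.1 ≤ Q ∧ 1 ≤ p.2 ∧ p.2 ≤ Q := fun p hp => by
    simp only [F, Finset.mem_product, Finset.mem_Icc] at hp
    omega
  refine ⟨testSet (2 * Q) γ Q, isBounded_testSet hγ Q, measurableSet_testSet Q, ?_, ?_⟩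
  · rw [volume_testSet hγ]
    exact ENNReal.ofReal_pos.2 (by positivity)
  calc ENNReal.ofReal (Q ^ 2 * 2 ^ (2 * Q) / 4) * volume (testSet (2 * Q) γ Q)
      = ∑ p ∈ F, volume (levelPiece (2 * Q) γ Q p.1 p.2) := by
        rw [Finset.sum_congr rfl fun p hp => volume_levelPiece hγ (hF p hp).2.1 p.2,
          Finset.sum_const, Finset.card_product, Nat.card_Icc, nsmul_eq_mul, ← mul_assoc,
          ← ENNReal.ofReal_natCast, ← ENNReal.ofReal_mul (by positivity)]
        congr 2
        rw [zpow_sub₀ two_ne_zero, zpow_natCast]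
        push_cast
        ring
    _ = volume (⋃ p ∈ F, levelPiece (2 * Q) γ Q p.1 p.2) :=
        (measure_biUnion_finset (fun p _ q _ hpq => disjoint_levelPiece Q hpq)
          fun p _ => measurableSet_levelPiece Q p.1 p.2).symm
    _ ≤ _ := by
        refine measure_mono (iUnion₂_subset fun p hp => ?_)
        obtain ⟨h1, h2, h3, h4⟩ := hF p hp
        exact levelPiece_subset_superlevel hgap' (hγΓ _ h2) h1 h2 h3 (by omega) hα

theorem inv_mul_one_add_logb_sq_le_one {α : ℝ} (hα0 : 0 < α) (hα1 : α < 1)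
    (h : Real.logb 2 (1 / α) ≤ 6) :
    1 / 4096 * (1 / α) * (1 + Real.logb 2 (1 / α)) ^ 2 ≤ 1 := by
  set L := Real.logb 2 (1 / α)
  have hL : (2:ℝ) ^ L = 1 / α := Real.rpow_logb two_pos (by norm_num) (by positivity)
  have hL0 : 0 ≤ L := Real.logb_nonneg one_lt_two (by rw [le_div_iff₀ hα0]; linarith)
  have hαL : 1 / α ≤ 64 := by
    rw [← hL]
    calc (2:ℝ) ^ L ≤ 2 ^ (6:ℝ) := Real.rpow_le_rpow_of_exponent_le one_le_two h
      _ = 64 := by norm_num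
  have : (1 + L) ^ 2 ≤ 49 := by nlinarith
  nlinarith [one_div_pos.2 hα0]

theorem exists_nat_inv_mul_one_add_logb_sq_le {α : ℝ} (hα0 : 0 < α) (h : 6 < Real.logb 2 (1 / α)) :
    ∃ Q : ℕ, α * 2 ^ (2 * Q + 2) < 1 ∧
      1 / 4096 * (1 / α) * (1 + Real.logb 2 (1 / α)) ^ 2 ≤ Q ^ 2 * 2 ^ (2 * Q) / 4 := by
  set L := Real.logb 2 (1 / α)
  have hL : (2:ℝ) ^ L = 1 / α := Real.rpow_logb two_pos (by norm_num) (by positivity)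
  have hc : 3 < ⌈L / 2⌉₊ := Nat.lt_ceil.2 (by push_cast; linarith)
  obtain ⟨Q, hQ⟩ : ∃ Q : ℕ, ⌈L / 2⌉₊ = Q + 2 := ⟨⌈L / 2⌉₊ - 2, by omega⟩
  have hc1 : L / 2 ≤ Q + 2 := by exact_mod_cast hQ ▸ Nat.le_ceil (L / 2)
  have hc2 : (Q : ℝ) + 2 < L / 2 + 1 := by exact_mod_cast hQ ▸ Nat.ceil_lt_add_one (by linarith)
  have hQ2 : (2:ℝ) ≤ Q := by exact_mod_cast (show 2 ≤ Q by omega)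
  have hpow (n : ℕ) : (2:ℝ) ^ (n : ℝ) = 2 ^ n := Real.rpow_natCast 2 n
  refine ⟨Q, ?_, ?_⟩
  · have : (2:ℝ) ^ (2 * Q + 2) < 1 / α := by
      rw [← hL, ← hpow]
      exact Real.rpow_lt_rpow_of_exponent_lt one_lt_two (by push_cast; linarith)
    rwa [lt_div_iff₀ hα0, mul_comm] at this
  · have h1 : 1 / α ≤ 16 * 2 ^ (2 * Q) := by
      rw [← hL, show 16 * (2:ℝ) ^ (2 * Q) = 2 ^ (2 * Q + 4) by ring, ← hpow]
      exact Real.rpow_le_rpow_of_exponent_le one_le_two (by push_cast; linarith)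
    have h2 : (1 + L) ^ 2 ≤ 25 * Q ^ 2 := by nlinarith
    calc 1 / 4096 * (1 / α) * (1 + L) ^ 2
        ≤ 1 / 4096 * (16 * 2 ^ (2 * Q)) * (25 * (Q : ℝ) ^ 2) := by
          gcongr
      _ ≤ (Q : ℝ) ^ 2 * 2 ^ (2 * Q) / 4 := by nlinarith [pow_pos (two_pos (α := ℝ)) (2 * Q)]

end Zygmund

/-- Application III (Zygmund bases): sharp weak type `L(1+log⁺L)²` lower bound. -/
theorem statement11 (Γ : Set ℤ) (hΓ : Γ.Infinite)
    (B : Set (BoxInterval 3))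
    (hBdef : B = {R | (∃ s : ℤ, R.side 0 = (2:ℝ) ^ s) ∧ (∃ s : ℤ, R.side 1 = (2:ℝ) ^ s) ∧
      ∃ γ ∈ Γ, R.side 2 = (2:ℝ) ^ γ * R.side 1}) :
    ∃ c : ℝ, 0 < c ∧ ∀ α : ℝ, 0 < α → α < 1 →
      ∃ E : Set (Fin 3 → ℝ), Bornology.IsBounded E ∧ MeasurableSet E ∧ 0 < volume E ∧
        ENNReal.ofReal (c * (1 / α) * (1 + Real.logb 2 (1 / α)) ^ 2) * volume E ≤
          volume {x | ENNReal.ofReal α < maxOp B (E.indicator fun _ => (1:ℝ)) x} := by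
  subst hBdef
  refine ⟨1 / 4096, by norm_num, fun α hα0 hα1 => ?_⟩
  rcases le_or_gt (Real.logb 2 (1 / α)) 6 with hsmall | hlarge
  · obtain ⟨E, hEb, hEm, hE0, hEsub⟩ := exists_box_subset_superlevel hΓ.nonempty hα1
    refine ⟨E, hEb, hEm, hE0, ?_⟩
    calc _ ≤ 1 * volume E := by
          gcongr
          exact ENNReal.ofReal_le_one.2 (Zygmund.inv_mul_one_add_logb_sq_le_one hα0 hα1 hsmall)
      _ ≤ _ := by rw [one_mul]; exact measure_mono hEsub
  · obtain ⟨Q, hQα, hQ⟩ := Zygmund.exists_nat_inv_mul_one_add_logb_sq_le hα0 hlarge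
    obtain ⟨E, hEb, hEm, hE0, hE⟩ := Zygmund.exists_superlevel_volume_ge hΓ Q hQα
    exact ⟨E, hEb, hEm, hE0, le_trans (by gcongr) hE⟩

end
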